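/- Let 1 < p < 2 with 1/p + 1/p′ = 1 and let z = α + iδ_{p′} with α ∈ ℝ. There exists a constant C_p > 0, depending only on p and q, such that for every F ∈ L^{p′}(Ω,ν), every x ∈ 𝔛 and every ω ∈ E(x), |P_z F(x)| ≤ C_p·q^{−|x|/p′}·ℰ(|F|)(ω). -/

import Mathlib

open Complex MeasureTheory ENNReal Filter

noncomputable section

/-- A homogeneous tree of degree `q + 1`: a connected acyclic graph in which every
vertex has exactly `q + 1` neighbours, together with a fixed reference vertex `o`. -/
structure HomTree (q : ℕ) where
  X : Type
  G : SimpleGraph X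
  connected : G.Connected
  acyclic : G.IsAcyclic
  regular : ∀ x : X, (G.neighborSet x).ncard = q + 1
  o : X

namespace HomTree

/-- `τ = 2π / log q`. -/
def tau (q : ℕ) : ℝ := 2 * Real.pi / Real.log q

/-- The meromorphic `c`-function. -/
def cfun (q : ℕ) (z : ℂ) : ℂ :=
  ((q : ℂ) ^ ((1 : ℂ) / 2) / ((q : ℂ) + 1)) *
    (((q : ℂ) ^ ((1 : ℂ) / 2 + I * z) - (q : ℂ) ^ (-(1 : ℂ) / 2 - I * z)) /
      ((q : ℂ) ^ (I * z) - (q : ℂ) ^ (-(I * z))))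

/-- The coefficients `B′(n,m,s)`. -/
def Bp (q : ℕ) (s : ℝ) (n m : ℕ) : ℂ :=
  if n = 0 then
    (q : ℂ) ^ (-(I * (s : ℂ) * (m : ℂ))) +
      cfun q (s : ℂ) * ((q : ℂ) ^ (I * (s : ℂ) * (m : ℂ)) - (q : ℂ) ^ (-(I * (s : ℂ) * (m : ℂ))))
  else
    cfun q (s : ℂ) * (q : ℂ) ^ (I * (s : ℂ) * ((n : ℂ) - 1)) *
      ((q : ℂ) ^ (I * (s : ℂ) * ((m : ℂ) - (n : ℂ) + 1)) -
        (q : ℂ) ^ (-(I * (s : ℂ) * ((m : ℂ) - (n : ℂ) + 1))))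

variable {q : ℕ} (T : HomTree q)

/-- Counting measurable structure on the vertices. -/
instance : MeasurableSpace T.X := ⊤

/-- `|x| = d(o, x)`. -/
def nrm (x : T.X) : ℕ := T.G.dist T.o x

open Classical in
/-- The elementary spherical function `φ_z`. -/
def sph (z : ℂ) (x : T.X) : ℂ :=
  if ∃ k : ℤ, z = (k : ℂ) * (tau q : ℂ) then
    ((((q : ℂ) - 1) / ((q : ℂ) + 1)) * (T.nrm x : ℂ) + 1) * (q : ℂ) ^ (-(T.nrm x : ℂ) / 2)
  else if ∃ k : ℤ, z = (tau q : ℂ) / 2 + (k : ℂ) * (tau q : ℂ) then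
    (-1) ^ (T.nrm x) * ((((q : ℂ) - 1) / ((q : ℂ) + 1)) * (T.nrm x : ℂ) + 1) *
      (q : ℂ) ^ (-(T.nrm x : ℂ) / 2)
  else
    cfun q z * (q : ℂ) ^ ((I * z - 1 / 2) * (T.nrm x : ℂ)) +
      cfun q (-z) * (q : ℂ) ^ ((-(I * z) - 1 / 2) * (T.nrm x : ℂ))

/-- A function on the tree is radial if it depends only on `|x|`. -/
def Radial (f : T.X → ℂ) : Prop := ∀ x y : T.X, T.nrm x = T.nrm y → f x = f y

/-- The weak `L^r` quasinorm `sup_{t>0} t · μ(|u| > t)^{1/r}` (w.r.t. the counting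
measure when the underlying measurable space carries `Measure.count`). -/
def weakN {Y : Type} [MeasurableSpace Y] (r : ℝ) (u : Y → ℂ) : ℝ≥0∞ :=
  ⨆ t : ℝ, ENNReal.ofReal t * (Measure.count {y | t < ‖u y‖}) ^ (1 / r)

/-- The Lorentz `L^{r,1}` norm `(1/r)∫₀^∞ u*(t) t^{1/r-1} dt`, written in the equivalent
layer-cake form `∫₀^∞ μ(|u| > s)^{1/r} ds`. -/
def lorN1 {Y : Type} [MeasurableSpace Y] (r : ℝ) (u : Y → ℂ) : ℝ≥0∞ :=
  ∫⁻ s in Set.Ioi (0 : ℝ), (Measure.count {y | s < ‖u y‖}) ^ (1 / r)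

/-- The boundary `Ω`: infinite geodesic rays starting at `o`. -/
structure Boundary where
  seq : ℕ → T.X
  start : seq 0 = T.o
  adj : ∀ n, T.G.Adj (seq n) (seq (n + 1))
  dist_eq : ∀ n, T.G.dist T.o (seq n) = n

/-- The basic boundary set `E(x) = {ω : ω_{|x|} = x}`. -/
def E (x : T.X) : Set T.Boundary := {ω | ω.seq (T.nrm x) = x}

/-- The σ-algebra on `Ω` generated by the sets `E(x)`. -/
instance : MeasurableSpace T.Boundary :=
  MeasurableSpace.generateFrom {S | ∃ x : T.X, S = T.E x}

/-- `|c(x,ω)|`: the distance from `o` of the last vertex on the geodesic from `o` to `x`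
lying on the ray `ω`. -/
def confl (ω : T.Boundary) (x : T.X) : ℕ :=
  Nat.findGreatest (fun n => n + T.G.dist (ω.seq n) x = T.nrm x) (T.nrm x)

/-- The Poisson kernel `p(x,ω) = q^{h_ω(x)} = q^{2|c(x,ω)| - |x|}`. -/
def pker (ω : T.Boundary) (x : T.X) : ℝ :=
  (q : ℝ) ^ ((2 * (T.confl ω x) : ℤ) - (T.nrm x : ℤ))

/-- The Poisson transform `P_z F(x) = ∫_Ω p(x,ω)^{1/2+iz} F(ω) dν(ω)`. -/
def ptrans (ν : Measure T.Boundary) (z : ℂ) (F : T.Boundary → ℂ) (x : T.X) : ℂ :=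
  ∫ ω, ((T.pker ω x : ℂ) ^ ((1 : ℂ) / 2 + I * z)) * F ω ∂ν

/-- The Laplacian `ℒu(x) = (q+1)⁻¹ ∑_{y ∼ x} u(y)`. -/
def lap (u : T.X → ℂ) (x : T.X) : ℂ :=
  (1 / ((q : ℂ) + 1)) * ∑' y : T.G.neighborSet x, u y

/-- `γ(z) = (q^{1/2+iz} + q^{1/2-iz})/(q+1)`. -/
def gam (q : ℕ) (z : ℂ) : ℂ :=
  ((q : ℂ) ^ ((1 : ℂ) / 2 + I * z) + (q : ℂ) ^ ((1 : ℂ) / 2 - I * z)) / ((q : ℂ) + 1)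

/-- The conditional expectation `ℰ_n F(ω) = ν(E(ω_n))⁻¹ ∫_{E(ω_n)} F dν` (real valued). -/
def condE (ν : Measure T.Boundary) (F : T.Boundary → ℝ) (n : ℕ) (ω : T.Boundary) : ℝ :=
  (ν {ω' : T.Boundary | ω'.seq n = ω.seq n}).toReal⁻¹ *
    ∫ ω' in {ω' : T.Boundary | ω'.seq n = ω.seq n}, F ω' ∂ν

/-- The conditional expectation (complex valued). -/
def condEC (ν : Measure T.Boundary) (F : T.Boundary → ℂ) (n : ℕ) (ω : T.Boundary) : ℂ :=
  (((ν {ω' : T.Boundary | ω'.seq n = ω.seq n}).toReal⁻¹ : ℝ) : ℂ) *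
    ∫ ω' in {ω' : T.Boundary | ω'.seq n = ω.seq n}, F ω' ∂ν

/-- The martingale maximal function `ℰF(ω) = sup_n |ℰ_n F(ω)|`, valued in `[0,∞]`. -/
def maximal (ν : Measure T.Boundary) (F : T.Boundary → ℝ) (ω : T.Boundary) : ℝ≥0∞ :=
  ⨆ n : ℕ, ENNReal.ofReal |T.condE ν F n ω|

/-- The martingale difference `Δ_n F = ℰ_n F - ℰ_{n-1} F`, with `ℰ_{-1} = 0`. -/
def deltaC (ν : Measure T.Boundary) (F : T.Boundary → ℂ) (n : ℕ) (ω : T.Boundary) : ℂ :=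
  T.condEC ν F n ω - if n = 0 then 0 else T.condEC ν F (n - 1) ω

/-- `y` and `x` have the same `n`-th vertex on their geodesics from `o`. -/
def sameAt (n : ℕ) (x y : T.X) : Prop :=
  ∃ v : T.X, T.nrm v = n ∧ T.nrm v + T.G.dist v x = T.nrm x ∧ T.nrm v + T.G.dist v y = T.nrm y

/-- `S(n,x)`: `{x}` if `|x| ≤ n`, and `{y : |y| = |x|, y_n = x_n}` otherwise. -/
def sphereSet (n : ℕ) (x : T.X) : Set T.X :=
  if T.nrm x ≤ n then {x} else {y | T.nrm y = T.nrm x ∧ T.sameAt n x y}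

open Classical in
/-- `ε_n u(x) = (#S(n,x))⁻¹ ∑_{y ∈ S(n,x)} u(y)`. -/
def epsOp (n : ℕ) (u : T.X → ℂ) (x : T.X) : ℂ :=
  (((T.sphereSet n x).ncard : ℂ))⁻¹ * ∑' y : T.sphereSet n x, u y

/-- The ball `B(x,r)`. -/
def ball (x : T.X) (r : ℕ) : Set T.X := {y | T.G.dist x y ≤ r}

/-- `ℳu(x) = sup_{r ≥ 1} (#B(x,r))^{-1/2} ∑_{y ∈ B(x,r)} |u(y)|`, valued in `[0,∞]`. -/
def maxOp (u : T.X → ℂ) (x : T.X) : ℝ≥0∞ :=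
  ⨆ r : ℕ+, (Measure.count (T.ball x (r : ℕ))) ^ (-(1 : ℝ) / 2) *
    ∑' y : T.ball x (r : ℕ), ENNReal.ofReal (‖u y‖)

/-- The Helgason–Fourier transform `f̃(z,ω) = ∑_x f(x) p(x,ω)^{1/2+iz}`. -/
def hft (f : T.X → ℂ) (z : ℂ) (ω : T.Boundary) : ℂ :=
  ∑' x : T.X, f x * ((T.pker ω x : ℂ) ^ ((1 : ℂ) / 2 + I * z))

end HomTree

namespace HomTree

open SimpleGraph in
/-- In a connected acyclic graph, the point at given distance on the geodesic is unique. -/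
lemma tree_geo_unique {V : Type} {G : SimpleGraph V} (hc : G.Connected) (ha : G.IsAcyclic)
    {o x u v : V} (hu : G.dist o u + G.dist u x = G.dist o x)
    (hv : G.dist o v + G.dist v x = G.dist o x) (huv : G.dist o u = G.dist o v) : u = v := by
  obtain ⟨w1, hw1⟩ := hc.exists_walk_length_eq_dist o u
  obtain ⟨w2, hw2⟩ := hc.exists_walk_length_eq_dist u x
  obtain ⟨w3, hw3⟩ := hc.exists_walk_length_eq_dist o v
  obtain ⟨w4, hw4⟩ := hc.exists_walk_length_eq_dist v x
  have hlen1 : (w1.append w2).length = G.dist o x := by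
    rw [Walk.length_append, hw1, hw2, hu]
  have hlen2 : (w3.append w4).length = G.dist o x := by
    rw [Walk.length_append, hw3, hw4, hv]
  have hp1 := (w1.append w2).isPath_of_length_eq_dist hlen1
  have hp2 := (w3.append w4).isPath_of_length_eq_dist hlen2
  have hpq : (⟨w1.append w2, hp1⟩ : G.Path o x) = ⟨w3.append w4, hp2⟩ :=
    isAcyclic_iff_path_unique.mp ha _ _
  have heq : w1.append w2 = w3.append w4 := congrArg Subtype.val hpq
  have h1 : (w1.append w2).getVert (G.dist o u) = u := by
    rw [Walk.getVert_append, if_neg (by omega), hw1, Nat.sub_self, Walk.getVert_zero]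
  have h2 : (w3.append w4).getVert (G.dist o v) = v := by
    rw [Walk.getVert_append, if_neg (by omega), hw3, Nat.sub_self, Walk.getVert_zero]
  rw [← h1, ← h2, heq, huv]

lemma ray_walk {q : ℕ} (T : HomTree q) (ω : T.Boundary) (i k : ℕ) :
    ∃ w : T.G.Walk (ω.seq i) (ω.seq (i + k)), w.length = k := by
  induction k with
  | zero => exact ⟨SimpleGraph.Walk.nil, rfl⟩
  | succ k ih =>
    obtain ⟨w, hw⟩ := ih
    exact ⟨w.concat (ω.adj (i + k)), by simp [SimpleGraph.Walk.length_concat, hw]⟩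

lemma ray_dist {q : ℕ} (T : HomTree q) (ω : T.Boundary) {i n : ℕ} (h : i ≤ n) :
    T.G.dist (ω.seq i) (ω.seq n) = n - i := by
  obtain ⟨k, rfl⟩ := Nat.exists_eq_add_of_le h
  obtain ⟨w, hw⟩ := ray_walk T ω i k
  have h1 : T.G.dist (ω.seq i) (ω.seq (i + k)) ≤ k := le_of_le_of_eq (SimpleGraph.dist_le w) hw
  have h2 : (i + k : ℕ) ≤ i + T.G.dist (ω.seq i) (ω.seq (i + k)) := by
    calc (i + k : ℕ) = T.G.dist T.o (ω.seq (i + k)) := (ω.dist_eq _).symm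
      _ ≤ T.G.dist T.o (ω.seq i) + T.G.dist (ω.seq i) (ω.seq (i + k)) :=
        T.connected.dist_triangle
      _ = i + T.G.dist (ω.seq i) (ω.seq (i + k)) := by rw [ω.dist_eq]
  omega

lemma seq_eq_of_geo {q : ℕ} (T : HomTree q) {x : T.X} {ω ω' : T.Boundary}
    (hω : ω.seq (T.nrm x) = x) {m j : ℕ}
    (hm : m + T.G.dist (ω'.seq m) x = T.nrm x) (hjm : j ≤ m) (hmN : m ≤ T.nrm x) :
    ω'.seq j = ω.seq j := by
  have hdox : T.G.dist T.o x = T.nrm x := rfl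
  have hm' : ω'.seq m = ω.seq m := by
    apply tree_geo_unique T.connected T.acyclic (o := T.o) (x := x)
    · rw [ω'.dist_eq, hdox]; exact hm
    · have h2 := ray_dist T ω hmN (i := m)
      rw [hω] at h2
      rw [ω.dist_eq, hdox, h2]; omega
    · rw [ω.dist_eq, ω'.dist_eq]
  apply tree_geo_unique T.connected T.acyclic (o := T.o) (x := ω.seq m)
  · rw [ω'.dist_eq, ω.dist_eq, ← hm', ray_dist T ω' hjm]; omega
  · rw [ω.dist_eq, ω.dist_eq, ray_dist T ω hjm]; omega
  · rw [ω.dist_eq, ω'.dist_eq]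

lemma confl_le {q : ℕ} (T : HomTree q) (ω' : T.Boundary) (x : T.X) :
    T.confl ω' x ≤ T.nrm x := Nat.findGreatest_le _

lemma confl_spec {q : ℕ} (T : HomTree q) (ω' : T.Boundary) (x : T.X) :
    T.confl ω' x + T.G.dist (ω'.seq (T.confl ω' x)) x = T.nrm x := by
  have h0 : 0 + T.G.dist (ω'.seq 0) x = T.nrm x := by
    rw [ω'.start, zero_add]; rfl
  exact Nat.findGreatest_spec (P := fun n => n + T.G.dist (ω'.seq n) x = T.nrm x)
    (Nat.zero_le _) h0

lemma real_sum_bound {q : ℕ} (hq : 2 ≤ q) {p p' : ℝ} (hp : 1 < p) (hp2 : p < 2)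
    (hconj : 1 / p + 1 / p' = 1) (N : ℕ) :
    ∑ j ∈ Finset.range (N + 1), (q : ℝ) ^ ((2 * (j : ℝ) - N) * (1 / p)) * ((q : ℝ) ^ j)⁻¹ ≤
      ((q : ℝ) ^ (2 / p - 1) / ((q : ℝ) ^ (2 / p - 1) - 1)) * (q : ℝ) ^ (-(N : ℝ) / p') := by
  have ha : (1 : ℝ) < q := by exact_mod_cast (by omega : 1 < q)
  have ha0 : (0 : ℝ) < q := by linarith
  set a : ℝ := (q : ℝ) with haq
  set r : ℝ := a ^ (2 / p - 1) with hr
  have hp0 : 0 < p := by linarith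
  have hexp : 0 < 2 / p - 1 := by rw [sub_pos, lt_div_iff₀ hp0]; linarith
  have hr1 : 1 < r := (Real.one_lt_rpow_iff_of_pos ha0).mpr (Or.inl ⟨ha, hexp⟩)
  have hp' : 1 / p' = 1 - 1 / p := by linarith
  have hterm : ∀ j ∈ Finset.range (N + 1),
      a ^ ((2 * (j : ℝ) - N) * (1 / p)) * (a ^ j)⁻¹ = a ^ (-(N : ℝ) / p) * r ^ j := by
    intro j _
    have h1 : (a ^ j : ℝ) = a ^ ((j : ℕ) : ℝ) := (Real.rpow_natCast a j).symm
    have h2 : (r ^ j : ℝ) = a ^ ((2 / p - 1) * j) := by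
      rw [← Real.rpow_natCast r j, hr, ← Real.rpow_mul ha0.le]
    rw [h1, h2, ← Real.rpow_neg ha0.le, ← Real.rpow_add ha0, ← Real.rpow_add ha0]
    congr 1; ring
  have hb : a ^ (-(N : ℝ) / p) * r ^ N = a ^ (-(N : ℝ) / p') := by
    rw [← Real.rpow_natCast r N, hr, ← Real.rpow_mul ha0.le, ← Real.rpow_add ha0]
    congr 1
    have h3 : -(N : ℝ) / p' = -(N : ℝ) * (1 / p') := by ring
    rw [h3, hp']; ring
  rw [Finset.sum_congr rfl hterm, ← Finset.mul_sum]
  rw [geom_sum_eq (ne_of_gt hr1)]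
  calc a ^ (-(N : ℝ) / p) * ((r ^ (N + 1) - 1) / (r - 1))
      ≤ a ^ (-(N : ℝ) / p) * (r ^ (N + 1) / (r - 1)) := by
        have h4 : 0 < r - 1 := by linarith
        exact mul_le_mul_of_nonneg_left ((div_le_div_iff_of_pos_right h4).mpr (by linarith))
          (Real.rpow_nonneg ha0.le _)
    _ = (r / (r - 1)) * (a ^ (-(N : ℝ) / p) * r ^ N) := by rw [pow_succ]; ring
    _ = (r / (r - 1)) * a ^ (-(N : ℝ) / p') := by rw [hb]
/-- For `1 < p < 2` and `z = α + iδ_{p′}`: `|P_z F(x)| ≤ C_p q^{-|x|/p′} ℰ(|F|)(ω)` for all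
`x ∈ 𝔛` and `ω ∈ E(x)`. -/
theorem statement13 {q : ℕ} (hq : 2 ≤ q) (T : HomTree q) (ν : Measure T.Boundary)
    [IsProbabilityMeasure ν]
    (hν : ∀ x : T.X, x ≠ T.o →
      ν (T.E x) = (q : ℝ≥0∞) / (((q : ℝ≥0∞) + 1) * (q : ℝ≥0∞) ^ T.nrm x))
    (p p' : ℝ) (hp : 1 < p) (hp2 : p < 2) (hconj : 1 / p + 1 / p' = 1)
    (z : ℂ) (hz : z.im = 1 / p' - 1 / 2) :
    ∃ C : ℝ, 0 < C ∧ ∀ F : T.Boundary → ℂ, MemLp F (ENNReal.ofReal p') ν →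
      ∀ x : T.X, ∀ ω ∈ T.E x,
        ENNReal.ofReal (‖T.ptrans ν z F x‖) ≤
          ENNReal.ofReal (C * (q : ℝ) ^ (-(T.nrm x : ℝ) / p')) *
            T.maximal ν (fun ω' => ‖F ω'‖) ω := by
  classical
  have hq1 : (1 : ℝ) < q := by exact_mod_cast (by omega : 1 < q)
  have hq0 : (0 : ℝ) < q := by linarith
  have hp0 : 0 < p := by linarith
  have hexp : 0 < 2 / p - 1 := by rw [sub_pos, lt_div_iff₀ hp0]; linarith
  have hr1 : 1 < (q : ℝ) ^ (2 / p - 1) :=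
    (Real.one_lt_rpow_iff_of_pos hq0).mpr (Or.inl ⟨hq1, hexp⟩)
  have hp'inv : 1 / p' = 1 - 1 / p := by linarith
  have hp'invpos : 0 < 1 / p' := by
    rw [hp'inv, sub_pos]; rw [div_lt_one hp0]; linarith
  have hp'pos : 0 < p' := one_div_pos.mp hp'invpos
  have hp'1 : 1 ≤ p' := by
    have h2 : 1 / p' ≤ 1 := by
      rw [hp'inv]
      have : 0 < 1 / p := by positivity
      linarith
    exact (div_le_one hp'pos).mp h2
  refine ⟨(q : ℝ) ^ (2 / p - 1) / ((q : ℝ) ^ (2 / p - 1) - 1),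
    div_pos (by linarith) (by linarith), ?_⟩
  intro F hF x ω hω
  set N := T.nrm x with hN
  have hωx : ω.seq N = x := hω
  -- integrability
  have hInt : Integrable F ν := hF.integrable (ENNReal.one_le_ofReal.mpr hp'1)
  have habs : Integrable (fun ω' => ‖F ω'‖) ν := by
    simpa using hInt.norm
  have hFmeas : AEMeasurable (fun ω' => (‖F ω'‖₊ : ℝ≥0∞)) ν := hF.aestronglyMeasurable.enorm
  -- the sets S j
  set S : ℕ → Set T.Boundary := fun j => {ω' | ω'.seq j = ω.seq j} with hSdef
  have hnrmseq : ∀ j, T.nrm (ω.seq j) = j := ω.dist_eq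
  have hSE : ∀ j, S j = T.E (ω.seq j) := by
    intro j
    ext ω'
    simp [hSdef, HomTree.E, hnrmseq j]
  have hSmeas : ∀ j, MeasurableSet (S j) := fun j =>
    (hSE j) ▸ MeasurableSpace.measurableSet_generateFrom ⟨_, rfl⟩
  have hS0 : S 0 = Set.univ := by
    ext ω'
    simp [hSdef, ω'.start, ω.start]
  have hqe0 : (q : ℝ≥0∞) ≠ 0 := by exact_mod_cast (by omega : q ≠ 0)
  have hqet : (q : ℝ≥0∞) ≠ ⊤ := ENNReal.natCast_ne_top q
  have hνS : ∀ j, 1 ≤ j → ν (S j) = (q : ℝ≥0∞) / (((q : ℝ≥0∞) + 1) * (q : ℝ≥0∞) ^ j) := by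
    intro j hj
    have hne : ω.seq j ≠ T.o := by
      intro h
      have h2 := ω.dist_eq j
      rw [h, SimpleGraph.dist_self] at h2
      omega
    rw [hSE j, hν _ hne, hnrmseq j]
  have hνS_le : ∀ j, ν (S j) ≤ ((q : ℝ≥0∞) ^ j)⁻¹ := by
    intro j
    rcases Nat.eq_zero_or_pos j with hj | hj
    · subst hj; simp [hS0]
    · rw [hνS j hj]
      calc (q : ℝ≥0∞) / (((q : ℝ≥0∞) + 1) * (q : ℝ≥0∞) ^ j)
          ≤ (q : ℝ≥0∞) / ((q : ℝ≥0∞) * (q : ℝ≥0∞) ^ j) :=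
            ENNReal.div_le_div_left (mul_le_mul_left (by simp) _) _
        _ = ((q : ℝ≥0∞) ^ j)⁻¹ := by
            rw [div_eq_mul_inv, ENNReal.mul_inv (Or.inl hqe0) (Or.inl hqet), ← mul_assoc,
              ENNReal.mul_inv_cancel hqe0 hqet, one_mul]
  have hνfin : ∀ j, ν (S j) ≠ ⊤ := fun j => measure_ne_top ν _
  have hνpos : ∀ j, 0 < ν (S j) := by
    intro j
    rcases Nat.eq_zero_or_pos j with hj | hj
    · subst hj; simp [hS0]
    · rw [hνS j hj]
      exact ENNReal.div_pos hqe0 (ENNReal.mul_ne_top (by simp [hqet]) (ENNReal.pow_ne_top hqet))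
  -- norm of the kernel power
  set e : ℕ → ℝ := fun j => (q : ℝ) ^ ((2 * (j : ℝ) - N) * (1 / p)) with hedef
  have hre : ((1 : ℂ) / 2 + I * z).re = 1 / p := by
    have hconj' : p⁻¹ + p'⁻¹ = 1 := by rw [← one_div, ← one_div]; exact hconj
    simp [Complex.add_re, Complex.mul_re, Complex.I_re, Complex.I_im, hz]
    linarith
  have hnorm : ∀ ω', ‖(T.pker ω' x : ℂ) ^ ((1 : ℂ) / 2 + I * z)‖
      = e (T.confl ω' x) := by
    intro ω'
    have hpk : (0 : ℝ) < T.pker ω' x := zpow_pos (by positivity) _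
    rw [Complex.norm_cpow_eq_rpow_re_of_pos hpk, hre]
    show ((q : ℝ) ^ ((2 * (T.confl ω' x) : ℤ) - (N : ℤ)) : ℝ) ^ (1 / p) = _
    rw [← Real.rpow_intCast (q : ℝ) ((2 * (T.confl ω' x) : ℤ) - (N : ℤ)),
      ← Real.rpow_mul hq0.le]
    congr 1
    push_cast
    ring
  -- maximal function lower bound through condE
  set M := T.maximal ν (fun ω' => ‖F ω'‖) ω with hMdef
  -- step 1
  have h1 : ENNReal.ofReal (‖T.ptrans ν z F x‖) ≤
      ∫⁻ ω', ‖((T.pker ω' x : ℂ) ^ ((1 : ℂ) / 2 + I * z)) * F ω'‖₊ ∂ν := by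
    calc ENNReal.ofReal (‖T.ptrans ν z F x‖)
        = (‖T.ptrans ν z F x‖₊ : ℝ≥0∞) := by
          rw [ofReal_norm, enorm_eq_nnnorm]
      _ ≤ _ := enorm_integral_le_lintegral_enorm _
  -- pointwise bound
  have hpt : ∀ ω', (‖((T.pker ω' x : ℂ) ^ ((1 : ℂ) / 2 + I * z)) * F ω'‖₊ : ℝ≥0∞) ≤
      ∑ j ∈ Finset.range (N + 1),
        (S j).indicator (fun _ => ENNReal.ofReal (e j)) ω' * ‖F ω'‖₊ := by
    intro ω'
    set c := T.confl ω' x with hc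
    have hcN : c ≤ N := confl_le T ω' x
    have hmem : ω' ∈ S c := seq_eq_of_geo T hωx (confl_spec T ω' x) le_rfl hcN
    have hval : (‖((T.pker ω' x : ℂ) ^ ((1 : ℂ) / 2 + I * z)) * F ω'‖₊ : ℝ≥0∞)
        = ENNReal.ofReal (e c) * ‖F ω'‖₊ := by
      rw [nnnorm_mul, ENNReal.coe_mul]
      congr 1
      rw [← enorm_eq_nnnorm, ← ofReal_norm, hnorm ω']
    rw [hval]
    calc ENNReal.ofReal (e c) * ‖F ω'‖₊
        = (S c).indicator (fun _ => ENNReal.ofReal (e c)) ω' * ‖F ω'‖₊ := by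
          rw [Set.indicator_of_mem hmem]
      _ ≤ _ := Finset.single_le_sum
          (f := fun j => (S j).indicator (fun _ => ENNReal.ofReal (e j)) ω' * ‖F ω'‖₊)
          (fun i _ => zero_le) (Finset.mem_range.mpr (by omega))
  have h2 : ∫⁻ ω', ‖((T.pker ω' x : ℂ) ^ ((1 : ℂ) / 2 + I * z)) * F ω'‖₊ ∂ν ≤
      ∑ j ∈ Finset.range (N + 1),
        ∫⁻ ω', (S j).indicator (fun _ => ENNReal.ofReal (e j)) ω' * ‖F ω'‖₊ ∂ν := by
    refine le_trans (lintegral_mono hpt) ?_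
    rw [lintegral_finset_sum' _
      (fun j _ => (show AEMeasurable (fun ω' => (S j).indicator (fun _ => ENNReal.ofReal (e j)) ω' *
        (‖F ω'‖₊ : ℝ≥0∞)) ν from
        (measurable_const.indicator (hSmeas j)).aemeasurable.mul hFmeas))]
  have h3 : ∀ j, ∫⁻ ω', (S j).indicator (fun _ => ENNReal.ofReal (e j)) ω' * ‖F ω'‖₊ ∂ν
      = ENNReal.ofReal (e j) * ∫⁻ ω' in S j, ‖F ω'‖₊ ∂ν := by
    intro j
    have hind : ∀ ω', (S j).indicator (fun _ => ENNReal.ofReal (e j)) ω' * ‖F ω'‖₊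
        = (S j).indicator (fun ω'' => ENNReal.ofReal (e j) * ‖F ω''‖₊) ω' := by
      intro ω'
      by_cases h : ω' ∈ S j <;> simp [h]
    simp_rw [hind]
    rw [lintegral_indicator (hSmeas j), lintegral_const_mul' _ _ ENNReal.ofReal_ne_top]
  have h4 : ∀ j, ∫⁻ ω' in S j, (‖F ω'‖₊ : ℝ≥0∞) ∂ν ≤ ν (S j) * M := by
    intro j
    have hint : Integrable (fun ω' => ‖F ω'‖) (ν.restrict (S j)) :=
      habs.restrict
    have heq1 : ∫⁻ ω' in S j, (‖F ω'‖₊ : ℝ≥0∞) ∂ν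
        = ENNReal.ofReal (∫ ω' in S j, ‖F ω'‖ ∂ν) := by
      rw [ofReal_integral_eq_lintegral_ofReal hint
        (Filter.Eventually.of_forall (fun ω' => norm_nonneg _))]
      refine lintegral_congr fun ω' => ?_
      rw [← enorm_eq_nnnorm, ofReal_norm]
    have hcond : T.condE ν (fun ω' => ‖F ω'‖) j ω
        = (ν (S j)).toReal⁻¹ * ∫ ω' in S j, ‖F ω'‖ ∂ν := rfl
    have hposR : 0 < (ν (S j)).toReal := ENNReal.toReal_pos (ne_of_gt (hνpos j)) (hνfin j)
    have hXint : ∫ ω' in S j, ‖F ω'‖ ∂ν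
        = (ν (S j)).toReal * T.condE ν (fun ω' => ‖F ω'‖) j ω := by
      rw [hcond, ← mul_assoc, mul_inv_cancel₀ (ne_of_gt hposR), one_mul]
    rw [heq1, hXint, ENNReal.ofReal_mul ENNReal.toReal_nonneg,
      ENNReal.ofReal_toReal (hνfin j)]
    refine mul_le_mul_right ?_ _
    refine le_trans (ENNReal.ofReal_le_ofReal (le_abs_self _)) ?_
    exact le_iSup (fun n => ENNReal.ofReal |T.condE ν (fun ω' => ‖F ω'‖) n ω|) j
  -- ENNReal bound for the measure in terms of reals
  have hB : ∀ j : ℕ, ((q : ℝ≥0∞) ^ j)⁻¹ = ENNReal.ofReal (((q : ℝ) ^ j)⁻¹) := by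
    intro j
    rw [ENNReal.ofReal_inv_of_pos (by positivity), ENNReal.ofReal_pow hq0.le]
    congr 1
    simp [ENNReal.ofReal_natCast]
  -- combine
  calc ENNReal.ofReal (‖T.ptrans ν z F x‖)
      ≤ ∑ j ∈ Finset.range (N + 1), ENNReal.ofReal (e j) * ∫⁻ ω' in S j, (‖F ω'‖₊ : ℝ≥0∞) ∂ν :=
        h1.trans (h2.trans_eq (Finset.sum_congr rfl fun j _ => h3 j))
    _ ≤ ∑ j ∈ Finset.range (N + 1), ENNReal.ofReal (e j * ((q : ℝ) ^ j)⁻¹) * M := by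
        refine Finset.sum_le_sum fun j _ => ?_
        calc ENNReal.ofReal (e j) * ∫⁻ ω' in S j, (‖F ω'‖₊ : ℝ≥0∞) ∂ν
            ≤ ENNReal.ofReal (e j) * (ν (S j) * M) := mul_le_mul_right (h4 j) _
          _ = (ENNReal.ofReal (e j) * ν (S j)) * M := by ring
          _ ≤ (ENNReal.ofReal (e j) * ENNReal.ofReal (((q : ℝ) ^ j)⁻¹)) * M := by
              exact mul_le_mul_left (mul_le_mul_right ((hνS_le j).trans_eq (hB j)) _) _
          _ = ENNReal.ofReal (e j * ((q : ℝ) ^ j)⁻¹) * M := by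
              rw [ENNReal.ofReal_mul (Real.rpow_nonneg hq0.le _)]
    _ = ENNReal.ofReal (∑ j ∈ Finset.range (N + 1), e j * ((q : ℝ) ^ j)⁻¹) * M := by
        rw [← Finset.sum_mul, ← ENNReal.ofReal_sum_of_nonneg
          (fun j _ => mul_nonneg (Real.rpow_nonneg hq0.le _) (by positivity))]
    _ ≤ ENNReal.ofReal (((q : ℝ) ^ (2 / p - 1) / ((q : ℝ) ^ (2 / p - 1) - 1)) *
          (q : ℝ) ^ (-(N : ℝ) / p')) * M := by
        exact mul_le_mul_left (ENNReal.ofReal_le_ofReal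
          (real_sum_bound hq hp hp2 hconj N)) _

end HomTree
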